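/- Let φ : (0, ∞) → (0, ∞) be an increasing positive function, and for g ∈ C(𝕋) set ‖g‖_φ = ‖g‖_∞ + sup_{δ>0} ‖g − g(· + δ)‖_∞/φ(δ) (a value in [0, ∞]). Let A : C(𝕋) → C(𝕋) be a bounded linear operator that commutes with translations, i.e. A(f(· + h))(x) = A(f)(x + h) for all f ∈ C(𝕋) and h, x ∈ ℝ. Then for every f ∈ C(𝕋) and every natural number n ≥ 1, ‖A(f) − f‖_φ ≤ ‖A(f) − f‖_∞·(1 + 2/φ(1/n)) + sup_{0<δ≤1/n} (2·ω(f, δ)/φ(δ))·(1 + ‖A‖), where ‖A‖ is the operator norm of A. -/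

import Mathlib

/-!
Put `g = A f - f`. Since `A` commutes with translations, `g - g(· + δ) = (A - 1) u` with
`u = f - f(· + δ)`, so `‖g - g(· + δ)‖ ≤ (1 + ‖A‖) ω(f, δ)`; this handles `δ ≤ 1/n`.
For `δ > 1/n` one only uses `‖g - g(· + δ)‖ ≤ 2 ‖g‖` and `φ δ ≥ φ (1/n)`.
-/

instance : Fact (0 < 2 * Real.pi) := ⟨by positivity⟩

/-- Translation by `h` on continuous functions on the circle `ℝ/2πℤ`:
`(trC h g)(x) = g(x + h)`. -/
noncomputable def trC (h : ℝ) (g : C(AddCircle (2 * Real.pi), ℂ)) :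
    C(AddCircle (2 * Real.pi), ℂ) :=
  g.comp ⟨fun x => x + (h : AddCircle (2 * Real.pi)), by continuity⟩

/-- The modulus of continuity `ω(f, δ)` of a continuous `2π`-periodic function. -/
noncomputable def modCont (f : C(AddCircle (2 * Real.pi), ℂ)) (δ : ℝ) : ℝ :=
  ⨆ p : {p : ℝ × ℝ // |p.1 - p.2| ≤ δ},
    ‖f ((p.1.1 : ℝ) : AddCircle (2 * Real.pi)) -
      f ((p.1.2 : ℝ) : AddCircle (2 * Real.pi))‖

lemma ENNReal.ofReal_add_iSup_div_le {φ F G : ℝ → ℝ} {a c r : ℝ} (hr : 0 < r)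
    (hφ_pos : ∀ t, 0 < t → 0 < φ t) (hφ_mono : MonotoneOn φ (Set.Ioi 0))
    (ha : 0 ≤ a) (hc : 0 ≤ c)
    (hF_large : ∀ δ, 0 < δ → F δ ≤ 2 * a)
    (hF_small : ∀ δ, 0 < δ → δ ≤ r → F δ ≤ G δ * c) :
    ENNReal.ofReal a + (⨆ (δ : ℝ) (_ : 0 < δ), ENNReal.ofReal (F δ / φ δ)) ≤
      ENNReal.ofReal (a * (1 + 2 / φ r)) +
        (⨆ (δ : ℝ) (_ : 0 < δ ∧ δ ≤ r), ENNReal.ofReal (G δ / φ δ)) * ENNReal.ofReal c := by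
  have hφr := hφ_pos r hr
  have ha_le : ENNReal.ofReal a ≤ ENNReal.ofReal (a * (1 + 2 / φ r)) :=
    ENNReal.ofReal_le_ofReal (le_mul_of_one_le_right ha (by simp; positivity))
  rw [ENNReal.add_iSup]
  refine iSup_le fun δ => ?_
  by_cases hδ : 0 < δ
  swap
  · rw [iSup_neg hδ, bot_eq_zero, add_zero]
    exact ha_le.trans le_self_add
  rw [iSup_pos hδ]
  have hφδ := hφ_pos δ hδ
  rcases le_or_gt δ r with hle | hlt
  · refine add_le_add ha_le ?_
    calc ENNReal.ofReal (F δ / φ δ) ≤ ENNReal.ofReal (G δ / φ δ * c) := by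
          rw [div_mul_eq_mul_div]
          gcongr
          exact hF_small δ hδ hle
      _ = ENNReal.ofReal (G δ / φ δ) * ENNReal.ofReal c := ENNReal.ofReal_mul' hc
      _ ≤ _ := by
          gcongr
          exact le_iSup₂_of_le (f := fun δ (_ : 0 < δ ∧ δ ≤ r) => ENNReal.ofReal (G δ / φ δ))
            δ ⟨hδ, hle⟩ le_rfl
  · have hφ_le : φ r ≤ φ δ := hφ_mono hr hδ hlt.le
    calc ENNReal.ofReal a + ENNReal.ofReal (F δ / φ δ)
        ≤ ENNReal.ofReal a + ENNReal.ofReal (2 * a / φ r) := by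
          refine add_le_add le_rfl (ENNReal.ofReal_le_ofReal ?_)
          calc F δ / φ δ ≤ 2 * a / φ δ := by gcongr; exact hF_large δ hδ
            _ ≤ 2 * a / φ r := by gcongr
      _ = ENNReal.ofReal (a * (1 + 2 / φ r)) := by
          rw [← ENNReal.ofReal_add ha (by positivity)]
          ring_nf
      _ ≤ _ := le_self_add

lemma ContinuousLinearMap.norm_apply_sub_self_le {𝕜 E : Type*} [NontriviallyNormedField 𝕜]
    [SeminormedAddCommGroup E] [NormedSpace 𝕜 E] (A : E →L[𝕜] E) (u : E) :
    ‖A u - u‖ ≤ (1 + ‖A‖) * ‖u‖ :=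
  calc ‖A u - u‖ ≤ ‖A‖ * ‖u‖ + ‖u‖ := (norm_sub_le _ _).trans (by gcongr; exact A.le_opNorm u)
    _ = (1 + ‖A‖) * ‖u‖ := by ring

local notation "𝕋" => AddCircle (2 * Real.pi)

@[simp]
lemma trC_apply (h : ℝ) (g : C(𝕋, ℂ)) (x : 𝕋) : trC h g x = g (x + (h : 𝕋)) := rfl

lemma trC_sub (h : ℝ) (g₁ g₂ : C(𝕋, ℂ)) : trC h (g₁ - g₂) = trC h g₁ - trC h g₂ := rfl

lemma norm_trC_le (h : ℝ) (g : C(𝕋, ℂ)) : ‖trC h g‖ ≤ ‖g‖ :=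
  (ContinuousMap.norm_le _ (norm_nonneg g)).mpr fun _ => g.norm_coe_le_norm _

lemma norm_sub_trC_le (h : ℝ) (g : C(𝕋, ℂ)) : ‖g - trC h g‖ ≤ 2 * ‖g‖ :=
  calc ‖g - trC h g‖ ≤ ‖g‖ + ‖g‖ := (norm_sub_le _ _).trans (by gcongr; exact norm_trC_le h g)
    _ = 2 * ‖g‖ := by ring

lemma trC_map_of_commute {A : C(𝕋, ℂ) →L[ℂ] C(𝕋, ℂ)}
    (hA_comm : ∀ (f : C(𝕋, ℂ)) (h : ℝ) (x : 𝕋), A (trC h f) x = A f (x + (h : 𝕋)))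
    (h : ℝ) (f : C(𝕋, ℂ)) : trC h (A f) = A (trC h f) := by
  ext x
  exact (hA_comm f h x).symm

lemma modCont_bddAbove (f : C(𝕋, ℂ)) (δ : ℝ) :
    BddAbove (Set.range fun p : {p : ℝ × ℝ // |p.1 - p.2| ≤ δ} =>
      ‖f ((p.1.1 : ℝ) : 𝕋) - f ((p.1.2 : ℝ) : 𝕋)‖) := by
  refine ⟨‖f‖ + ‖f‖, ?_⟩
  rintro _ ⟨p, rfl⟩
  exact (norm_sub_le _ _).trans (add_le_add (f.norm_coe_le_norm _) (f.norm_coe_le_norm _))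

lemma norm_sub_le_modCont (f : C(𝕋, ℂ)) {δ s t : ℝ} (hst : |s - t| ≤ δ) :
    ‖f (s : 𝕋) - f (t : 𝕋)‖ ≤ modCont f δ :=
  le_ciSup (modCont_bddAbove f δ) (⟨(s, t), hst⟩ : {p : ℝ × ℝ // |p.1 - p.2| ≤ δ})

lemma modCont_nonneg (f : C(𝕋, ℂ)) {δ : ℝ} (hδ : 0 ≤ δ) : 0 ≤ modCont f δ :=
  (norm_nonneg _).trans (norm_sub_le_modCont f (s := 0) (t := 0) (by simpa using hδ))

lemma norm_sub_trC_le_modCont (f : C(𝕋, ℂ)) {δ : ℝ} (hδ : 0 ≤ δ) :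
    ‖f - trC δ f‖ ≤ modCont f δ := by
  refine (ContinuousMap.norm_le _ (modCont_nonneg f hδ)).mpr fun x => ?_
  obtain ⟨t, rfl⟩ := QuotientAddGroup.mk_surjective x
  rw [ContinuousMap.sub_apply, trC_apply, ← AddCircle.coe_add]
  exact norm_sub_le_modCont f (by simp [abs_of_nonneg hδ])

lemma norm_sub_trC_map_sub_self_le {A : C(𝕋, ℂ) →L[ℂ] C(𝕋, ℂ)}
    (hA_comm : ∀ (f : C(𝕋, ℂ)) (h : ℝ) (x : 𝕋), A (trC h f) x = A f (x + (h : 𝕋)))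
    (f : C(𝕋, ℂ)) {δ : ℝ} (hδ : 0 ≤ δ) :
    ‖(A f - f) - trC δ (A f - f)‖ ≤ (1 + ‖A‖) * modCont f δ := by
  have hcomm : (A f - f) - trC δ (A f - f) = A (f - trC δ f) - (f - trC δ f) := by
    rw [trC_sub, trC_map_of_commute hA_comm, map_sub]
    abel
  rw [hcomm]
  exact (A.norm_apply_sub_self_le _).trans (by gcongr; exact norm_sub_trC_le_modCont f hδ)

/-- Leindler–Meir–Totik. For a bounded linear operator `A`
on `C(𝕋)` commuting with translations, and an increasing positive `φ` on
`(0,∞)`: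
`‖A f - f‖_φ ≤ ‖A f - f‖_∞ (1 + 2/φ(1/n)) + sup_{0<δ≤1/n} (2 ω(f,δ)/φ(δ)) (1 + ‖A‖)`. -/
theorem phi_norm_estimate_translation_invariant
    (φ : ℝ → ℝ) (hφ_pos : ∀ t : ℝ, 0 < t → 0 < φ t)
    (hφ_mono : StrictMonoOn φ (Set.Ioi (0:ℝ)))
    (A : C(AddCircle (2 * Real.pi), ℂ) →L[ℂ] C(AddCircle (2 * Real.pi), ℂ))
    (hA_comm : ∀ (f : C(AddCircle (2 * Real.pi), ℂ)) (h : ℝ)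
      (x : AddCircle (2 * Real.pi)),
        A (trC h f) x = A f (x + (h : AddCircle (2 * Real.pi))))
    (f : C(AddCircle (2 * Real.pi), ℂ)) (n : ℕ) (hn : 1 ≤ n) :
    ENNReal.ofReal ‖A f - f‖ +
      (⨆ (δ : ℝ) (_ : 0 < δ),
        ENNReal.ofReal (‖(A f - f) - trC δ (A f - f)‖ / φ δ)) ≤
    ENNReal.ofReal (‖A f - f‖ * (1 + 2 / φ (1 / (n : ℝ)))) +
      (⨆ (δ : ℝ) (_ : 0 < δ ∧ δ ≤ 1 / (n : ℝ)),
        ENNReal.ofReal (2 * modCont f δ / φ δ)) *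
        ENNReal.ofReal (1 + ‖A‖) := by
  have hn_pos : (0 : ℝ) < 1 / (n : ℝ) := by
    have : (0 : ℝ) < n := by exact_mod_cast hn
    positivity
  refine ENNReal.ofReal_add_iSup_div_le hn_pos hφ_pos hφ_mono.monotoneOn (norm_nonneg _)
    (by positivity) (fun δ _ => norm_sub_trC_le δ _) fun δ hδ _ => ?_
  have hω := modCont_nonneg f hδ.le
  calc ‖(A f - f) - trC δ (A f - f)‖ ≤ (1 + ‖A‖) * modCont f δ :=
        norm_sub_trC_map_sub_self_le hA_comm f hδ.le
    _ ≤ 2 * modCont f δ * (1 + ‖A‖) := by nlinarith [norm_nonneg A]
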